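/- arXiv:1606.08369 — 7 statements merged into one kernel-verified Lean document; each statement's English description precedes it below -/
import Mathlib

section
/- For all real r with |r| < 1, the Mathieu series S(r) = \sum_{n\ge 1} 2n/(n^2+r^2)^2 admits the expansion S(r) = 2 \sum_{n\ge 0} (-1)^n (n+1) \zeta(2n+3) r^{2n}, where \zeta is the Riemann zeta function. -/
/-!
Expanding $2a/(a^2+r^2)^2 = (2/a^3)\sum_n (n+1)(-r^2/a^2)^n$ with $a = m+1$ turns $S(r)$ into a
double series. For $r^2 < 1$ it converges absolutely, being dominated termwise by
$2(n+1)r^{2n} \cdot (m+1)^{-3}$, so the order of summation may be exchanged, and the sum over $m$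
of the coefficient of $r^{2n}$ is $\zeta(2n+3)$.
-/

open MeasureTheory Real

/-- Riemann zeta function for real argument. -/
noncomputable def rzeta (a : ℝ) : ℝ := ∑' n : ℕ, 1 / ((n : ℝ) + 1) ^ a

theorem rzeta_natCast (k : ℕ) : rzeta k = ∑' m : ℕ, 1 / ((m : ℝ) + 1) ^ k := by
  simp only [rzeta, Real.rpow_natCast]

theorem summable_one_div_add_one_pow {p : ℕ} (hp : 1 < p) :
    Summable fun m : ℕ => 1 / ((m : ℝ) + 1) ^ p := by
  simpa using (summable_nat_add_iff 1).mpr (summable_one_div_nat_pow.mpr hp)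

theorem hasSum_add_one_mul_geometric {𝕜 : Type*} [NormedDivisionRing 𝕜]
    [HasSummableGeomSeries 𝕜] {x : 𝕜} (hx : ‖x‖ < 1) :
    HasSum (fun n : ℕ => ((n : 𝕜) + 1) * x ^ n) (1 / (1 - x) ^ 2) := by
  simpa using hasSum_choose_mul_geometric_of_norm_lt_one 1 hx

theorem hasSum_two_mul_div_sq_add_sq_sq {a r : ℝ} (ha : 0 < a) (hr : r ^ 2 < a ^ 2) :
    HasSum (fun n : ℕ => 2 * (-1) ^ n * ((n : ℝ) + 1) * r ^ (2 * n) / a ^ (2 * n + 3))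
      (2 * a / (a ^ 2 + r ^ 2) ^ 2) := by
  have hx : ‖-r ^ 2 / a ^ 2‖ < 1 := by
    rw [norm_div, norm_neg, Real.norm_of_nonneg (by positivity),
      Real.norm_of_nonneg (by positivity), div_lt_one (by positivity)]
    exact hr
  have hsum := (hasSum_add_one_mul_geometric hx).mul_left (2 / a ^ 3)
  have hval : 2 / a ^ 3 * (1 / (1 - -r ^ 2 / a ^ 2) ^ 2) = 2 * a / (a ^ 2 + r ^ 2) ^ 2 := by
    rw [neg_div, sub_neg_eq_add, one_add_div (by positivity)]
    field_simp
  rw [hval] at hsum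
  refine hsum.congr_fun fun n => ?_
  have hpow : (-r ^ 2 / a ^ 2) ^ n = (-1) ^ n * r ^ (2 * n) / a ^ (2 * n) := by
    rw [div_pow, neg_pow, ← pow_mul, ← pow_mul]
  rw [hpow]
  field_simp
  ring

noncomputable def mathieuDoubleTerm (r : ℝ) (n m : ℕ) : ℝ :=
  2 * (-1) ^ n * ((n : ℝ) + 1) * r ^ (2 * n) / ((m : ℝ) + 1) ^ (2 * n + 3)

namespace mathieuDoubleTerm

theorem hasSum_left {r : ℝ} (hr : r ^ 2 < 1) (m : ℕ) :
    HasSum (fun n => mathieuDoubleTerm r n m)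
      (2 * ((m : ℝ) + 1) / (((m : ℝ) + 1) ^ 2 + r ^ 2) ^ 2) :=
  hasSum_two_mul_div_sq_add_sq_sq (by positivity)
    (by nlinarith [show (1 : ℝ) ≤ (m : ℝ) + 1 by simp])

theorem tsum_right (r : ℝ) (n : ℕ) :
    ∑' m, mathieuDoubleTerm r n m =
      2 * ((-1) ^ n * ((n : ℝ) + 1) * rzeta (2 * n + 3) * r ^ (2 * n)) := by
  rw [show (2 * n + 3 : ℝ) = ((2 * n + 3 : ℕ) : ℝ) by push_cast; ring, rzeta_natCast,
    ← tsum_mul_left, ← tsum_mul_right, ← tsum_mul_left]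
  exact tsum_congr fun m => by simp only [mathieuDoubleTerm]; ring

theorem summable {r : ℝ} (hr : r ^ 2 < 1) :
    Summable (Function.uncurry (mathieuDoubleTerm r)) := by
  have hr' : ‖r ^ 2‖ < 1 := by rwa [Real.norm_of_nonneg (sq_nonneg r)]
  have hgeom : Summable fun n : ℕ => 2 * (((n : ℝ) + 1) * (r ^ 2) ^ n) :=
    (hasSum_add_one_mul_geometric hr').summable.mul_left 2
  have hmajor := hgeom.mul_of_nonneg (summable_one_div_add_one_pow (p := 3) (by norm_num))
    (fun n => by positivity) (fun m => by positivity)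
  refine hmajor.of_norm_bounded fun ⟨n, m⟩ => ?_
  calc ‖mathieuDoubleTerm r n m‖
      = 2 * (((n : ℝ) + 1) * (r ^ 2) ^ n) / ((m : ℝ) + 1) ^ (2 * n + 3) := by
        simp only [mathieuDoubleTerm, Real.norm_eq_abs, abs_div, abs_mul, abs_pow, abs_neg,
          abs_one, one_pow, abs_two, pow_mul, sq_abs,
          abs_of_nonneg (by positivity : (0 : ℝ) ≤ (n : ℝ) + 1),
          abs_of_nonneg (by positivity : (0 : ℝ) ≤ (m : ℝ) + 1)]
        ring
    _ ≤ 2 * (((n : ℝ) + 1) * (r ^ 2) ^ n) * (1 / ((m : ℝ) + 1) ^ 3) := by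
        rw [mul_one_div]
        gcongr
        · simp
        · omega

end mathieuDoubleTerm

theorem mathieu_zeta_expansion (r : ℝ) (hr : |r| < 1) :
    (∑' n : ℕ, 2 * ((n : ℝ) + 1) / (((n : ℝ) + 1) ^ 2 + r ^ 2) ^ 2) =
      2 * ∑' n : ℕ, (-1) ^ n * ((n : ℝ) + 1) * rzeta (2 * n + 3) * r ^ (2 * n) := by
  have hr2 : r ^ 2 < 1 := (sq_lt_one_iff_abs_lt_one r).mpr hr
  calc (∑' m : ℕ, 2 * ((m : ℝ) + 1) / (((m : ℝ) + 1) ^ 2 + r ^ 2) ^ 2)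
      = ∑' m, ∑' n, mathieuDoubleTerm r n m :=
        tsum_congr fun m => (mathieuDoubleTerm.hasSum_left hr2 m).tsum_eq.symm
    _ = ∑' n, ∑' m, mathieuDoubleTerm r n m := (mathieuDoubleTerm.summable hr2).tsum_comm
    _ = ∑' n : ℕ, 2 * ((-1) ^ n * ((n : ℝ) + 1) * rzeta (2 * n + 3) * r ^ (2 * n)) :=
        tsum_congr (mathieuDoubleTerm.tsum_right r)
    _ = _ := tsum_mul_left
end

section
/- For r > 0, the Mathieu series S(r) = \sum_{n\ge 1} 2n/(n^2+r^2)^2 has the integral representation S(r) = (1/r) \int_0^\infty x \sin(r x)/(e^x - 1) dx. -/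
/-!
Since `1 / (eˣ - 1) = ∑_{n ≥ 1} e^{-n x}` for `x > 0`, the integral is `∑_{n ≥ 1}` of the
Laplace transforms `∫₀^∞ x e^{-n x} sin (r x) dx = 2 n r / (n² + r²)²`; each is the imaginary part
of `∫₀^∞ x e^{z x} dx = 1 / z²` at `z = -n + r i`. Integrating termwise is legitimate because
`∫₀^∞ |x e^{-n x} sin (r x)| dx ≤ ∫₀^∞ x e^{-n x} dx = 1 / n²` is summable.
-/

open MeasureTheory Real Filter Set Topology

section LaplaceTransform

variable {c : ℝ}

lemma tendsto_mul_exp_neg_mul_atTop (hc : 0 < c) :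
    Tendsto (fun x : ℝ => x * exp (-(c * x))) atTop (𝓝 0) := by
  simpa [neg_mul] using tendsto_rpow_mul_exp_neg_mul_atTop_nhds_zero 1 c hc

lemma integrableOn_mul_exp_neg_mul (hc : 0 < c) :
    IntegrableOn (fun x : ℝ => x * exp (-(c * x))) (Ioi 0) := by
  simpa using integrableOn_rpow_mul_exp_neg_mul_rpow (p := 1) (s := 1) (by norm_num) one_pos hc

lemma integral_mul_exp_neg_mul (hc : 0 < c) :
    ∫ x in Ioi (0 : ℝ), x * exp (-(c * x)) = 1 / c ^ 2 := by
  have h := integral_rpow_mul_exp_neg_mul_Ioi (a := 2) (by norm_num) hc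
  norm_num [Real.Gamma_two] at h
  simpa [div_pow] using h

variable {z : ℂ}

lemma norm_ofReal_mul_cexp {x : ℝ} (hx : 0 ≤ x) :
    ‖(x : ℂ) * Complex.exp (z * x)‖ = x * exp (-(-z.re * x)) := by
  simp [Complex.norm_exp, abs_of_nonneg hx]

lemma integrableOn_ofReal_mul_cexp (hz : z.re < 0) :
    IntegrableOn (fun x : ℝ => (x : ℂ) * Complex.exp (z * x)) (Ioi 0) := by
  refine Integrable.mono' (integrableOn_mul_exp_neg_mul (neg_pos.mpr hz))
    (by fun_prop) ?_
  filter_upwards [ae_restrict_mem measurableSet_Ioi] with x hx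
  exact (norm_ofReal_mul_cexp hx.le).le

lemma tendsto_ofReal_mul_cexp_atTop (hz : z.re < 0) :
    Tendsto (fun x : ℝ => (x : ℂ) * Complex.exp (z * x)) atTop (𝓝 0) := by
  rw [tendsto_zero_iff_norm_tendsto_zero]
  refine (tendsto_mul_exp_neg_mul_atTop (neg_pos.mpr hz)).congr' ?_
  filter_upwards [eventually_ge_atTop 0] with x hx
  rw [norm_ofReal_mul_cexp hx]

lemma tendsto_cexp_mul_atTop (hz : z.re < 0) :
    Tendsto (fun x : ℝ => Complex.exp (z * x)) atTop (𝓝 0) := by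
  simpa [Complex.tendsto_exp_nhds_zero_iff] using tendsto_const_nhds.neg_mul_atTop hz tendsto_id

lemma hasDerivAt_cexp_mul_mul_sub (hz : z ≠ 0) (x : ℝ) :
    HasDerivAt (fun x : ℝ => Complex.exp (z * x) * (x / z - 1 / z ^ 2))
      ((x : ℂ) * Complex.exp (z * x)) x := by
  have hexp : HasDerivAt (fun x : ℝ => Complex.exp (z * x)) (Complex.exp (z * x) * z) x := by
    simpa using ((Complex.ofRealCLM.hasDerivAt (x := x)).const_mul z).cexp
  have hlin : HasDerivAt (fun x : ℝ => (x : ℂ) / z - 1 / z ^ 2) (1 / z) x := by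
    simpa using ((Complex.ofRealCLM.hasDerivAt (x := x)).div_const z).sub_const (1 / z ^ 2)
  refine (hexp.mul hlin).congr_deriv ?_
  field_simp
  ring

lemma integral_ofReal_mul_cexp (hz : z.re < 0) :
    ∫ x in Ioi (0 : ℝ), (x : ℂ) * Complex.exp (z * x) = 1 / z ^ 2 := by
  have hz0 : z ≠ 0 := by rintro rfl; simp at hz
  have hlim : Tendsto (fun x : ℝ => Complex.exp (z * x) * (x / z - 1 / z ^ 2)) atTop (𝓝 0) := by
    have := ((tendsto_ofReal_mul_cexp_atTop hz).div_const z).sub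
      ((tendsto_cexp_mul_atTop hz).mul_const (1 / z ^ 2))
    simp only [zero_div, zero_mul, sub_zero] at this
    exact this.congr fun x => by ring
  rw [integral_Ioi_of_hasDerivAt_of_tendsto
    (hasDerivAt_cexp_mul_mul_sub hz0 0).continuousAt.continuousWithinAt
    (fun x _ => hasDerivAt_cexp_mul_mul_sub hz0 x) (integrableOn_ofReal_mul_cexp hz) hlim]
  simp

lemma integral_mul_exp_neg_mul_mul_sin (hc : 0 < c) (r : ℝ) :
    ∫ x in Ioi (0 : ℝ), x * exp (-(c * x)) * sin (r * x) = 2 * c * r / (c ^ 2 + r ^ 2) ^ 2 := by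
  set z : ℂ := -c + r * Complex.I
  have hz : z.re < 0 := by simpa [z] using hc
  have him : ∀ x : ℝ, ((x : ℂ) * Complex.exp (z * x)).im = x * exp (-(c * x)) * sin (r * x) := by
    intro x
    simp [z, Complex.exp_im, Complex.mul_re, Complex.mul_im]
    ring
  have hval : (1 / z ^ 2).im = 2 * c * r / (c ^ 2 + r ^ 2) ^ 2 := by
    simp [z, Complex.inv_im, Complex.normSq_apply, pow_two]
    field_simp
    ring
  simp_rw [← him, ← hval, ← integral_ofReal_mul_cexp hz]
  exact integral_im (integrableOn_ofReal_mul_cexp hz)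

end LaplaceTransform

lemma hasSum_exp_neg_succ_mul {x : ℝ} (hx : 0 < x) :
    HasSum (fun n : ℕ => exp (-((n + 1) * x))) (1 / (exp x - 1)) := by
  have hq : exp (-x) < 1 := exp_lt_one_iff.mpr (neg_lt_zero.mpr hx)
  have hsum : exp (-x) * (1 - exp (-x))⁻¹ = 1 / (exp x - 1) := by
    have : exp x - 1 ≠ 0 := (sub_pos.mpr (one_lt_exp_iff.mpr hx)).ne'
    rw [exp_neg]
    field_simp
  have hterm (n : ℕ) : exp (-x) * exp (-x) ^ n = exp (-((n + 1) * x)) := by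
    rw [← exp_nat_mul, ← exp_add]
    ring_nf
  simpa only [hterm, hsum] using
    (hasSum_geometric_of_lt_one (exp_pos _).le hq).mul_left (exp (-x))

lemma norm_mul_exp_neg_mul_mul_sin_le {x : ℝ} (hx : 0 ≤ x) (c r : ℝ) :
    ‖x * exp (-(c * x)) * sin (r * x)‖ ≤ x * exp (-(c * x)) := by
  rw [norm_mul, Real.norm_of_nonneg (by positivity)]
  exact mul_le_of_le_one_right (by positivity) (abs_sin_le_one _)

section DampedSine

variable {c : ℝ} (hc : 0 < c) (r : ℝ)
include hc

lemma integrableOn_mul_exp_neg_mul_mul_sin :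
    IntegrableOn (fun x : ℝ => x * exp (-(c * x)) * sin (r * x)) (Ioi 0) := by
  refine Integrable.mono' (integrableOn_mul_exp_neg_mul hc) (by fun_prop) ?_
  filter_upwards [ae_restrict_mem measurableSet_Ioi] with x hx
  exact norm_mul_exp_neg_mul_mul_sin_le hx.le c r

lemma integral_norm_mul_exp_neg_mul_mul_sin_le :
    ∫ x in Ioi (0 : ℝ), ‖x * exp (-(c * x)) * sin (r * x)‖ ≤ 1 / c ^ 2 := by
  rw [← integral_mul_exp_neg_mul hc]
  refine integral_mono_ae (integrableOn_mul_exp_neg_mul_mul_sin hc r).norm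
    (integrableOn_mul_exp_neg_mul hc) ?_
  filter_upwards [ae_restrict_mem measurableSet_Ioi] with x hx
  exact norm_mul_exp_neg_mul_mul_sin_le hx.le c r

end DampedSine

theorem mathieu_integral_representation (r : ℝ) (hr : 0 < r) :
    (∑' n : ℕ, 2 * ((n : ℝ) + 1) / (((n : ℝ) + 1) ^ 2 + r ^ 2) ^ 2) =
      (1 / r) * ∫ x in Set.Ioi (0 : ℝ), x * Real.sin (r * x) / (Real.exp x - 1) := by
  set F : ℕ → ℝ → ℝ := fun n x => x * exp (-((n + 1) * x)) * sin (r * x)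
  have hpos (n : ℕ) : (0 : ℝ) < n + 1 := by positivity
  have hF_sum : Summable fun n => ∫ x in Ioi (0 : ℝ), ‖F n x‖ := by
    refine Summable.of_nonneg_of_le (fun n => integral_nonneg fun x => norm_nonneg _)
      (fun n => integral_norm_mul_exp_neg_mul_mul_sin_le (hpos n) r) ?_
    exact_mod_cast (summable_nat_add_iff 1).mpr (summable_one_div_nat_pow.mpr one_lt_two)
  have hF_tsum : ∀ x ∈ Ioi (0 : ℝ), ∑' n, F n x = x * sin (r * x) / (exp x - 1) := by
    intro x hx
    simpa [F, mul_right_comm _ _ (sin _), div_eq_mul_one_div (x * sin (r * x))] using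
      ((hasSum_exp_neg_succ_mul hx).mul_left (x * sin (r * x))).tsum_eq
  calc ∑' n : ℕ, 2 * ((n : ℝ) + 1) / (((n : ℝ) + 1) ^ 2 + r ^ 2) ^ 2
      = ∑' n, 1 / r * ∫ x in Ioi (0 : ℝ), F n x := by
        refine tsum_congr fun n => ?_
        rw [integral_mul_exp_neg_mul_mul_sin (hpos n)]
        field_simp
    _ = 1 / r * ∫ x in Ioi (0 : ℝ), ∑' n, F n x := by
        rw [tsum_mul_left, integral_tsum_of_summable_integral_norm
          (fun n => integrableOn_mul_exp_neg_mul_mul_sin (hpos n) r) hF_sum]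
    _ = _ := by rw [setIntegral_congr_fun measurableSet_Ioi hF_tsum]
end

section
/- For \mu > 0 and real r with |r| < 1, the generalized Mathieu series S_\mu(r) = \sum_{n\ge 1} 2n/(n^2+r^2)^{\mu+1} admits the expansion S_\mu(r) = 2 \sum_{n\ge 0} (-1)^n \binom{\mu+n}{n} \zeta(2\mu+2n+1) r^{2n}, where \binom{\mu+n}{n} = \Gamma(\mu+n+1)/(\Gamma(\mu+1) n!) is the generalized binomial coefficient. -/
open MeasureTheory Real

/-- Generalized binomial coefficient `binom (μ+n) n = Γ(μ+n+1)/(Γ(μ+1) n!)`. -/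
noncomputable def gbinom (μ : ℝ) (n : ℕ) : ℝ :=
  Real.Gamma (μ + n + 1) / (Real.Gamma (μ + 1) * n.factorial)

/-!
Expand every term by the binomial series: for `c = m + 1 > |r|`,
`c / (c² + r²)^(μ+1) = ∑ₙ (-1)ⁿ binom(μ+n, n) r²ⁿ / c^(2μ+2n+1)`.
Summing this double series over `m` first produces `ζ(2μ+2n+1)`. The interchange is legitimate
because the absolute values are dominated by the product of
`∑ₙ binom(μ+n, n) r²ⁿ = (1 - r²)^(-(μ+1))` and `∑ₘ (m+1)^(-(2μ+1)) = ζ(2μ+1)`.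
-/

theorem Real.Gamma_add_nat_eq_ascPochhammer_mul {s : ℝ} (hs : 0 < s) (n : ℕ) :
    Gamma (s + n) = (ascPochhammer ℝ n).eval s * Gamma s := by
  induction n with
  | zero => simp
  | succ n ih =>
    rw [Nat.cast_succ, ← add_assoc, Gamma_add_one (by positivity), ih,
      ascPochhammer_succ_right, Polynomial.eval_mul, Polynomial.eval_add,
      Polynomial.eval_X, Polynomial.eval_natCast]
    ring

theorem gbinom_eq_ringChoose {μ : ℝ} (hμ : -1 < μ) (n : ℕ) :
    gbinom μ n = Ring.choose (μ + n) n := by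
  have hΓ : Gamma (μ + 1) ≠ 0 := (Gamma_pos_of_pos (by linarith)).ne'
  rw [gbinom, Ring.choose_eq_smul, Polynomial.descPochhammer_smeval_eq_ascPochhammer,
    Polynomial.ascPochhammer_smeval_eq_eval, add_sub_cancel_right, add_right_comm,
    Gamma_add_nat_eq_ascPochhammer_mul (by linarith), smul_eq_mul]
  field_simp

theorem gbinom_nonneg {μ : ℝ} (hμ : -1 < μ) (n : ℕ) : 0 ≤ gbinom μ n := by
  have := Gamma_pos_of_pos (show 0 < μ + n + 1 by linarith [n.cast_nonneg (α := ℝ)])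
  have := Gamma_pos_of_pos (show 0 < μ + 1 by linarith)
  unfold gbinom
  positivity

theorem hasSum_gbinom_mul_pow {μ x : ℝ} (hμ : -1 < μ) (hx : |x| < 1) :
    HasSum (fun n : ℕ => gbinom μ n * x ^ n) (1 / (1 - x) ^ (μ + 1)) := by
  have h := (one_div_one_sub_rpow_hasFPowerSeriesOnBall_zero (μ + 1)).hasSum
    (y := x) (by simpa [Metric.mem_eball, edist_dist] using hx)
  simp only [FormalMultilinearSeries.ofScalars_apply_eq, zero_add, smul_eq_mul] at h
  refine h.congr_fun fun n => ?_
  rw [gbinom_eq_ringChoose hμ, add_sub_right_comm, add_sub_cancel_right]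

theorem hasSum_gbinom_mul_pow_div_rpow {μ c r : ℝ} (hμ : -1 < μ) (hc : 0 < c)
    (hr : |r| < c) :
    HasSum (fun n : ℕ => (-1) ^ n * gbinom μ n * r ^ (2 * n) * (1 / c ^ (2 * μ + 2 * n + 1)))
      (c / (c ^ 2 + r ^ 2) ^ (μ + 1)) := by
  have hx : |-(r / c) ^ 2| < 1 := by
    rw [abs_neg, abs_pow, abs_div, abs_of_pos hc, sq_lt_one_iff₀ (by positivity),
      div_lt_one hc]
    exact hr
  have h := (hasSum_gbinom_mul_pow hμ hx).mul_left (1 / c ^ (2 * μ + 1))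
  have hsum : 1 / c ^ (2 * μ + 1) * (1 / (1 - -(r / c) ^ 2) ^ (μ + 1))
      = c / (c ^ 2 + r ^ 2) ^ (μ + 1) := by
    have hc2 : (c ^ 2 : ℝ) ^ (μ + 1) = c ^ (2 * μ + 1) * c := by
      rw [← rpow_natCast, ← rpow_mul hc.le,
        show ((2 : ℕ) : ℝ) * (μ + 1) = (2 * μ + 1) + 1 by push_cast; ring,
        rpow_add hc, rpow_one]
    rw [sub_neg_eq_add, show 1 + (r / c) ^ 2 = (c ^ 2 + r ^ 2) / c ^ 2 by field_simp,
      div_rpow (by positivity) (by positivity), hc2]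
    field_simp
  rw [hsum] at h
  refine h.congr_fun fun n => ?_
  rw [show 2 * μ + 2 * n + 1 = (2 * μ + 1) + ((2 * n : ℕ) : ℝ) by push_cast; ring,
    rpow_add hc, rpow_natCast, neg_pow ((r / c) ^ 2), ← pow_mul, div_pow]
  field_simp

theorem summable_one_div_nat_add_one_rpow {a : ℝ} (ha : 1 < a) :
    Summable (fun m : ℕ => 1 / ((m : ℝ) + 1) ^ a) := by
  refine ((Real.summable_one_div_nat_add_rpow 1 a).mpr ha).congr fun m => ?_
  rw [abs_of_pos (by positivity)]

section MathieuDoubleSeries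

noncomputable def mathieuTerm (μ r : ℝ) (n m : ℕ) : ℝ :=
  (-1) ^ n * gbinom μ n * r ^ (2 * n) * (1 / ((m : ℝ) + 1) ^ (2 * μ + 2 * n + 1))

variable {μ r : ℝ}

theorem hasSum_mathieuTerm_binomial (hμ : -1 < μ) (hr : |r| < 1) (m : ℕ) :
    HasSum (fun n => mathieuTerm μ r n m)
      (((m : ℝ) + 1) / (((m : ℝ) + 1) ^ 2 + r ^ 2) ^ (μ + 1)) :=
  hasSum_gbinom_mul_pow_div_rpow hμ (Nat.cast_add_one_pos m)
    (by linarith [m.cast_nonneg (α := ℝ)])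

theorem hasSum_mathieuTerm_zeta (hμ : 0 < μ) (n : ℕ) :
    HasSum (fun m => mathieuTerm μ r n m)
      ((-1) ^ n * gbinom μ n * rzeta (2 * μ + 2 * n + 1) * r ^ (2 * n)) := by
  have h : HasSum (fun m => mathieuTerm μ r n m)
      ((-1) ^ n * gbinom μ n * r ^ (2 * n) * rzeta (2 * μ + 2 * n + 1)) :=
    (summable_one_div_nat_add_one_rpow (by linarith [n.cast_nonneg (α := ℝ)])).hasSum.mul_left _
  rwa [mul_right_comm] at h

theorem summable_mathieuTerm (hμ : 0 < μ) (hr : |r| < 1) :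
    Summable (fun p : ℕ × ℕ => mathieuTerm μ r p.1 p.2) := by
  have hμ' : -1 < μ := by linarith
  have hr2 : |r ^ 2| < 1 := by rw [abs_pow, sq_lt_one_iff₀ (abs_nonneg r)]; exact hr
  have hmajorant := (hasSum_gbinom_mul_pow hμ' hr2).summable.mul_of_nonneg
    (summable_one_div_nat_add_one_rpow (a := 2 * μ + 1) (by linarith))
    (fun n => mul_nonneg (gbinom_nonneg hμ' n) (pow_nonneg (sq_nonneg r) n))
    (fun m => by positivity)
  refine Summable.of_norm_bounded hmajorant fun ⟨n, m⟩ => ?_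
  have hnorm : ‖mathieuTerm μ r n m‖
      = gbinom μ n * (r ^ 2) ^ n * (1 / ((m : ℝ) + 1) ^ (2 * μ + 2 * n + 1)) := by
    rw [mathieuTerm, norm_mul, norm_mul, norm_mul, norm_pow, norm_neg, norm_one, one_pow,
      one_mul, Real.norm_of_nonneg (gbinom_nonneg hμ' n), norm_pow, Real.norm_eq_abs, pow_mul,
      ← abs_pow, abs_of_nonneg (sq_nonneg r), Real.norm_of_nonneg (by positivity)]
  have hm : (1 : ℝ) ≤ m + 1 := by linarith [m.cast_nonneg (α := ℝ)]
  rw [hnorm]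
  gcongr
  · exact mul_nonneg (gbinom_nonneg hμ' n) (pow_nonneg (sq_nonneg r) n)
  · linarith [n.cast_nonneg (α := ℝ)]

end MathieuDoubleSeries

theorem generalized_mathieu_zeta_expansion (μ r : ℝ) (hμ : 0 < μ) (hr : |r| < 1) :
    (∑' n : ℕ, 2 * ((n : ℝ) + 1) / (((n : ℝ) + 1) ^ 2 + r ^ 2) ^ (μ + 1)) =
      2 * ∑' n : ℕ, (-1) ^ n * gbinom μ n * rzeta (2 * μ + 2 * n + 1) * r ^ (2 * n) := by
  simp_rw [mul_div_assoc, tsum_mul_left]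
  congr 1
  calc ∑' m : ℕ, ((m : ℝ) + 1) / (((m : ℝ) + 1) ^ 2 + r ^ 2) ^ (μ + 1)
      = ∑' m, ∑' n, mathieuTerm μ r n m :=
        tsum_congr fun m => (hasSum_mathieuTerm_binomial (by linarith) hr m).tsum_eq.symm
    _ = ∑' n, ∑' m, mathieuTerm μ r n m := (summable_mathieuTerm hμ hr).tsum_comm
    _ = _ := tsum_congr fun n => (hasSum_mathieuTerm_zeta hμ n).tsum_eq
end

section
/- Let p \ge 0. Then for all x > 0, e^{-p/x} \le C_p(x), where C_p(x) = 2x/(p e^2) for 0 < x < p/2, C_p(x) = 4x/(p e^2) - 1/e^2 for p/2 \le x < (p/4)(1+e^2), and C_p(x) = 1 for x \ge (p/4)(1+e^2). -/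
/-!
Substituting `t = p / x`, each branch becomes a bound on `t * exp (-t)`. For `t ≥ 2` this function
is at most its value `2 * exp (-2)` at `t = 2`, because `exp (t - 2) ≥ t - 1 ≥ t / 2`. For
`0 < t ≤ 2` the bound `t * exp (-t) ≤ (4 - t) * exp (-2)` is the Padé-type estimate
`exp (2 * y) ≤ (1 + y) / (1 - y)` at `y = 1 - t / 2`, i.e. `y ≤ artanh y`.
-/

open Real

theorem Real.exp_two_mul_le_one_add_div_one_sub {y : ℝ} (hy₀ : 0 ≤ y) (hy₁ : y < 1) :
    exp (2 * y) ≤ (1 + y) / (1 - y) := by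
  have h := sum_range_le_log_div hy₀ hy₁ 1
  norm_num at h
  rw [← le_log_iff_exp_le (by apply div_pos <;> linarith)]
  linarith

theorem Real.mul_exp_neg_le_of_two_le {t : ℝ} (ht : 2 ≤ t) : t * exp (-t) ≤ 2 * exp (-2) := by
  have h : t ≤ 2 * exp (t - 2) := by linarith [add_one_le_exp (t - 2)]
  calc t * exp (-t) ≤ 2 * exp (t - 2) * exp (-t) := by gcongr
    _ = 2 * exp (-2) := by rw [mul_assoc, ← exp_add]; ring_nf

theorem Real.mul_exp_neg_le_of_le_two {t : ℝ} (ht₀ : 0 < t) (ht : t ≤ 2) :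
    t * exp (-t) ≤ (4 - t) * exp (-2) := by
  have h := exp_two_mul_le_one_add_div_one_sub (y := 1 - t / 2) (by linarith) (by linarith)
  have h' : t * exp (2 - t) ≤ 4 - t := by
    rwa [show 2 * (1 - t / 2) = 2 - t by ring,
      show (1 + (1 - t / 2)) / (1 - (1 - t / 2)) = (4 - t) / t by
        rw [div_eq_div_iff (by linarith) ht₀.ne']; ring,
      le_div_iff₀' ht₀] at h
  calc t * exp (-t) = t * exp (2 - t) * exp (-2) := by rw [mul_assoc, ← exp_add]; ring_nf
    _ ≤ (4 - t) * exp (-2) := by gcongr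

theorem exp_kernel_piecewise_bound (p : ℝ) (hp : 0 ≤ p) :
    ∀ x : ℝ, 0 < x →
      Real.exp (-p / x) ≤
        (if x < p / 2 then 2 * x / (p * Real.exp 2)
         else if x < p / 4 * (1 + Real.exp 2) then 4 * x / (p * Real.exp 2) - 1 / Real.exp 2
         else 1) := by
  intro x hx
  rw [neg_div]
  split_ifs with h₁ h₂
  · have hp₀ : 0 < p := by linarith
    have ht : 2 ≤ p / x := by rw [le_div_iff₀ hx]; linarith
    have hrhs : 2 * x / (p * exp 2) = 2 * exp (-2) / (p / x) := by
      rw [exp_neg]; field_simp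
    rw [hrhs, le_div_iff₀' (by positivity)]
    exact mul_exp_neg_le_of_two_le ht
  · have hp₀ : 0 < p := by by_contra! h; nlinarith [exp_pos 2]
    have ht : p / x ≤ 2 := by rw [div_le_iff₀ hx]; linarith
    have hrhs : 4 * x / (p * exp 2) - 1 / exp 2 = (4 - p / x) * exp (-2) / (p / x) := by
      rw [exp_neg]; field_simp
    rw [hrhs, le_div_iff₀' (by positivity)]
    exact mul_exp_neg_le_of_le_two (by positivity) ht
  · exact exp_le_one_iff.mpr (neg_nonpos.mpr (by positivity))
end

section
/- The function f(x) = x/(e^x - 1), extended by f(0) = 1, is monotone decreasing and convex on (0, \infty). -/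
open Real Set

/-!
With `f x = x / (exp x - 1)` one has
`f' x = (exp x - 1 - x * exp x) / (exp x - 1) ^ 2` and
`f'' x = exp x * (x * (exp x + 1) - 2 * (exp x - 1)) / (exp x - 1) ^ 3`.
The numerator of `f'` is `≤ 0` because `1 - x ≤ exp (-x)`. The bracket in `f''` is `≥ 0` for
`x ≥ 0` (this is `tanh (x / 2) ≤ x / 2`): it vanishes at `0` and its derivative
`1 - exp x * (1 - x)` is again nonnegative by `1 - x ≤ exp (-x)`.
-/

lemma exp_mul_one_sub_le_one (x : ℝ) : exp x * (1 - x) ≤ 1 :=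
  calc exp x * (1 - x) ≤ exp x * exp (-x) := by gcongr; linarith [add_one_le_exp (-x)]
    _ = 1 := by rw [← exp_add, add_neg_cancel, exp_zero]

lemma two_mul_exp_sub_one_le {x : ℝ} (hx : 0 ≤ x) : 2 * (exp x - 1) ≤ x * (exp x + 1) := by
  let g : ℝ → ℝ := fun y => y * (exp y + 1) - 2 * (exp y - 1)
  have hg : ∀ y, HasDerivAt g (1 - exp y * (1 - y)) y := fun y =>
    (((hasDerivAt_id' y).mul ((hasDerivAt_exp y).add_const 1)).sub
      (((hasDerivAt_exp y).sub_const 1).const_mul 2)).congr_deriv (by ring)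
  have : g 0 ≤ g x :=
    monotone_of_hasDerivAt_nonneg hg (fun y => sub_nonneg.2 (exp_mul_one_sub_le_one y)) hx
  simpa [g] using this

lemma exp_sub_one_ne_zero {x : ℝ} (hx : x ≠ 0) : exp x - 1 ≠ 0 :=
  sub_ne_zero.2 fun h => hx (exp_eq_one_iff x |>.1 h)

lemma hasDerivAt_div_exp_sub_one {x : ℝ} (hx : x ≠ 0) :
    HasDerivAt (fun x => x / (exp x - 1)) ((exp x - 1 - x * exp x) / (exp x - 1) ^ 2) x :=
  ((hasDerivAt_id' x).div ((hasDerivAt_exp x).sub_const 1) (exp_sub_one_ne_zero hx)).congr_deriv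
    (by ring)

lemma hasDerivAt_exp_sub_one_sub_mul_exp_div {x : ℝ} (hx : x ≠ 0) :
    HasDerivAt (fun x => (exp x - 1 - x * exp x) / (exp x - 1) ^ 2)
      (exp x * (x * (exp x + 1) - 2 * (exp x - 1)) / (exp x - 1) ^ 3) x := by
  have hne := exp_sub_one_ne_zero hx
  have hnum :=
    ((hasDerivAt_exp x).sub_const 1).fun_sub ((hasDerivAt_id' x).fun_mul (hasDerivAt_exp x))
  refine (hnum.div (((hasDerivAt_exp x).sub_const 1).fun_pow 2) (pow_ne_zero 2 hne)).congr_deriv ?_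
  field_simp
  ring

theorem kernel_antitone_convex :
    AntitoneOn (fun x : ℝ => x / (Real.exp x - 1)) (Set.Ioi 0) ∧
      ConvexOn ℝ (Set.Ioi 0) (fun x : ℝ => x / (Real.exp x - 1)) := by
  have hpos : ∀ x ∈ Ioi (0 : ℝ), 0 < exp x - 1 := fun x hx => sub_pos.2 (one_lt_exp_iff.2 hx)
  have hf' : ∀ x ∈ Ioi (0 : ℝ), HasDerivAt (fun x => x / (exp x - 1)) _ x :=
    fun x hx => hasDerivAt_div_exp_sub_one (ne_of_gt hx)
  have hcont : ContinuousOn (fun x : ℝ => x / (exp x - 1)) (Ioi 0) :=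
    fun x hx => (hf' x hx).continuousAt.continuousWithinAt
  constructor
  · refine antitoneOn_of_hasDerivWithinAt_nonpos (convex_Ioi 0) hcont
      (fun x hx => (hf' x (interior_subset hx)).hasDerivWithinAt) fun x hx => ?_
    rw [interior_Ioi] at hx
    have hden := hpos x hx
    exact div_nonpos_of_nonpos_of_nonneg (by linarith [exp_mul_one_sub_le_one x]) (by positivity)
  · refine convexOn_of_hasDerivWithinAt2_nonneg (convex_Ioi 0) hcont
      (fun x hx => (hf' x (interior_subset hx)).hasDerivWithinAt)
      (fun x hx => (hasDerivAt_exp_sub_one_sub_mul_exp_div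
        (ne_of_gt (interior_subset hx : x ∈ Ioi 0))).hasDerivWithinAt) fun x hx => ?_
    rw [interior_Ioi] at hx
    have hden := hpos x hx
    have hbracket := two_mul_exp_sub_one_le hx.le
    exact div_nonneg (mul_nonneg (exp_pos x).le (by linarith)) (by positivity)
end

section
/- Let \alpha > 1 and b > 0. Then \frac{b^\alpha}{(\alpha-1)(e^b-1)} \le \int_0^b \frac{x^{\alpha-1}}{e^x-1} dx \le \frac{b^{\alpha-1}}{\alpha}\Big(\frac{1}{\alpha-1} + \frac{b}{e^b-1}\Big). -/
/-!
Write the integrand as `x ^ (α - 2) * g x` with `g x = x / (exp x - 1)`. On `(0, b]` the function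
`g` lies above its value `g b`, because `1 / g` is a secant slope of the convex function `exp`,
and below the line `1 - x / b + x / (exp b - 1)`, because `1 / x - 1 / (exp x - 1)` is
decreasing; the latter amounts to `x ^ 2 * exp x ≤ (exp x - 1) ^ 2`, i.e. `|x / 2| ≤ |sinh (x / 2)|`.
Integrating the two resulting power-law bounds against `x ^ (α - 2)` gives the claim.
-/

open MeasureTheory Real Set

lemma sq_mul_exp_le_sq_exp_sub_one (t : ℝ) : t ^ 2 * exp t ≤ (exp t - 1) ^ 2 := by
  have hsinh : (t / 2) ^ 2 ≤ sinh (t / 2) ^ 2 := by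
    rw [← sq_abs (sinh _), abs_sinh, ← sq_abs (t / 2)]
    exact pow_le_pow_left₀ (abs_nonneg _) (self_le_sinh_iff.2 (abs_nonneg _)) 2
  have hsq : (exp t - 1) ^ 2 = 4 * exp t * sinh (t / 2) ^ 2 := by
    have h1 : exp t = exp (t / 2) ^ 2 := by rw [← exp_nat_mul]; ring_nf
    rw [sinh_eq, exp_neg, h1]
    field_simp
    ring
  rw [hsq]
  nlinarith [exp_pos t]

lemma antitoneOn_div_exp_sub_one : AntitoneOn (fun x : ℝ ↦ x / (exp x - 1)) (Ioi 0) := by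
  intro x hx y hy hxy
  have hslope := convexOn_exp.slope_mono (mem_univ 0) ⟨mem_univ x, hx.ne'⟩ ⟨mem_univ y, hy.ne'⟩ hxy
  simp only [slope_def_field, exp_zero, sub_zero] at hslope
  simp only [← inv_div (exp _ - 1)]
  exact inv_anti₀ (div_pos (sub_pos.2 (one_lt_exp_iff.2 hx)) hx) hslope

lemma antitoneOn_inv_sub_inv_exp_sub_one :
    AntitoneOn (fun t : ℝ ↦ t⁻¹ - (exp t - 1)⁻¹) (Ioi 0) := by
  have hderiv (t : ℝ) (ht : 0 < t) : HasDerivAt (fun t ↦ t⁻¹ - (exp t - 1)⁻¹)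
      (exp t / (exp t - 1) ^ 2 - 1 / t ^ 2) t := by
    have hinv : HasDerivAt (fun t : ℝ ↦ t⁻¹) (-(t ^ 2)⁻¹) t := hasDerivAt_inv ht.ne'
    exact (hinv.sub (((hasDerivAt_exp t).sub_const 1).inv
      (sub_pos.2 (one_lt_exp_iff.2 ht)).ne')).congr_deriv (by ring)
  refine antitoneOn_of_hasDerivWithinAt_nonpos (convex_Ioi 0)
    (fun t ht ↦ (hderiv t ht).continuousAt.continuousWithinAt)
    (fun t ht ↦ (hderiv t (interior_subset ht)).hasDerivWithinAt) fun t ht ↦ ?_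
  rw [interior_Ioi, mem_Ioi] at ht
  have hE : 0 < exp t - 1 := sub_pos.2 (one_lt_exp_iff.2 ht)
  rw [sub_nonpos, div_le_div_iff₀ (by positivity) (by positivity)]
  linarith [sq_mul_exp_le_sq_exp_sub_one t]

lemma div_exp_sub_one_le_one_sub_div_add_div {x b : ℝ} (hx : 0 < x) (hxb : x ≤ b) :
    x / (exp x - 1) ≤ 1 - x / b + x / (exp b - 1) := by
  have h := mul_le_mul_of_nonneg_right
    (antitoneOn_inv_sub_inv_exp_sub_one hx (hx.trans_le hxb) hxb) hx.le
  simp only [sub_mul, inv_mul_cancel₀ hx.ne', inv_mul_eq_div] at h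
  linarith

lemma rpow_div_exp_sub_one_bounds {s x b : ℝ} (hx : 0 < x) (hxb : x ≤ b) :
    b / (exp b - 1) * x ^ (s - 1) ≤ x ^ s / (exp x - 1) ∧
      x ^ s / (exp x - 1) ≤ x ^ (s - 1) - (b⁻¹ - (exp b - 1)⁻¹) * x ^ s := by
  have hsplit : x ^ s / (exp x - 1) = x ^ (s - 1) * (x / (exp x - 1)) := by
    rw [rpow_sub_one hx.ne']
    field_simp
  have hpow : 0 ≤ x ^ (s - 1) := rpow_nonneg hx.le _
  rw [hsplit]
  constructor
  · rw [mul_comm]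
    exact mul_le_mul_of_nonneg_left (antitoneOn_div_exp_sub_one hx (hx.trans_le hxb) hxb) hpow
  · calc x ^ (s - 1) * (x / (exp x - 1))
        ≤ x ^ (s - 1) * (1 - x / b + x / (exp b - 1)) :=
          mul_le_mul_of_nonneg_left (div_exp_sub_one_le_one_sub_div_add_div hx hxb) hpow
      _ = x ^ (s - 1) - (b⁻¹ - (exp b - 1)⁻¹) * x ^ s := by
          have hb : 0 < b := hx.trans_le hxb
          rw [rpow_sub_one hx.ne']
          field_simp
          ring

lemma intervalIntegral.integral_sandwich {f L U : ℝ → ℝ} {a b : ℝ} (hab : a ≤ b)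
    (hf : AEStronglyMeasurable f (volume.restrict (Ioc a b)))
    (hL : IntervalIntegrable L volume a b) (hU : IntervalIntegrable U volume a b)
    (hLf : ∀ x ∈ Ioc a b, L x ≤ f x) (hfU : ∀ x ∈ Ioc a b, f x ≤ U x) :
    ∫ x in a..b, L x ≤ ∫ x in a..b, f x ∧ ∫ x in a..b, f x ≤ ∫ x in a..b, U x := by
  have hfi : IntervalIntegrable f volume a b :=
    (intervalIntegrable_iff_integrableOn_Ioc_of_le hab).2 <| integrable_of_le_of_le hf
      (ae_restrict_of_forall_mem measurableSet_Ioc hLf)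
      (ae_restrict_of_forall_mem measurableSet_Ioc hfU) hL.1 hU.1
  exact ⟨intervalIntegral.integral_mono_on_of_le_Ioo hab hL hfi
      fun x hx ↦ hLf x (Ioo_subset_Ioc_self hx),
    intervalIntegral.integral_mono_on_of_le_Ioo hab hfi hU
      fun x hx ↦ hfU x (Ioo_subset_Ioc_self hx)⟩

lemma integral_rpow_from_zero {r : ℝ} (hr : -1 < r) (b : ℝ) :
    ∫ x in (0 : ℝ)..b, x ^ r = b ^ (r + 1) / (r + 1) := by
  rw [integral_rpow (Or.inl hr), zero_rpow (by linarith), sub_zero]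

theorem kernel_integral_zero_b_bounds (α b : ℝ) (hα : 1 < α) (hb : 0 < b) :
    (b ^ α / ((α - 1) * (Real.exp b - 1)) ≤ ∫ x in (0 : ℝ)..b, x ^ (α - 1) / (Real.exp x - 1)) ∧
      (∫ x in (0 : ℝ)..b, x ^ (α - 1) / (Real.exp x - 1)) ≤
        b ^ (α - 1) / α * (1 / (α - 1) + b / (Real.exp b - 1)) := by
  have hE : 0 < exp b - 1 := sub_pos.2 (one_lt_exp_iff.2 hb)
  have hpow : b ^ α = b ^ (α - 1) * b := by rw [← rpow_add_one hb.ne', sub_add_cancel]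
  have hint (r : ℝ) (hr : -1 < r) : IntervalIntegrable (fun x : ℝ ↦ x ^ r) volume 0 b :=
    intervalIntegral.intervalIntegrable_rpow' hr
  obtain ⟨hlower, hupper⟩ := intervalIntegral.integral_sandwich hb.le
    (Measurable.aestronglyMeasurable (by fun_prop))
    ((hint (α - 1 - 1) (by linarith)).const_mul (b / (exp b - 1)))
    ((hint (α - 1 - 1) (by linarith)).sub
      ((hint (α - 1) (by linarith)).const_mul (b⁻¹ - (exp b - 1)⁻¹)))
    (fun x hx ↦ (rpow_div_exp_sub_one_bounds hx.1 hx.2).1)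
    (fun x hx ↦ (rpow_div_exp_sub_one_bounds hx.1 hx.2).2)
  rw [intervalIntegral.integral_const_mul, integral_rpow_from_zero (by linarith)] at hlower
  rw [intervalIntegral.integral_sub (hint _ (by linarith)) ((hint _ (by linarith)).const_mul _),
    intervalIntegral.integral_const_mul, integral_rpow_from_zero (by linarith),
    integral_rpow_from_zero (by linarith)] at hupper
  simp only [sub_add_cancel] at hlower hupper
  have hα1 : α - 1 ≠ 0 := by linarith
  have hα0 : α ≠ 0 := by linarith
  refine ⟨le_of_eq_of_le ?_ hlower, hupper.trans_eq ?_⟩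
  · rw [hpow]; field_simp
  · rw [hpow]; field_simp; ring
end

section
/- Let \alpha > 1 and b > 0. Then \int_b^\infty \frac{x^{\alpha-1}}{e^x-1} dx \le \Gamma(\alpha)\zeta(\alpha) - \frac{b^\alpha}{(\alpha-1)(e^b-1)}. -/
open MeasureTheory Real

/-!
Expanding `1 / (exp x - 1) = ∑ₙ exp (-(n + 1) x)` and integrating termwise (monotone convergence)
gives `∫₀^∞ x ^ (α - 1) / (exp x - 1) = Γ(α) ζ(α)`, so it suffices to bound the integral over
`(0, b]` from below. There, convexity of `exp` gives `exp x - 1 ≤ (x / b) (exp b - 1)`, so the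
integrand dominates `b / (exp b - 1) * x ^ (α - 2)`, whose integral is
`b ^ α / ((α - 1) (exp b - 1))`.
-/

open Set

lemma hasSum_rzeta {α : ℝ} (hα : 1 < α) :
    HasSum (fun n : ℕ => 1 / ((n : ℝ) + 1) ^ α) (rzeta α) := by
  have hsum := (summable_one_div_nat_add_rpow 1 α).mpr hα
  refine (hsum.congr fun n => ?_).hasSum
  rw [abs_of_pos (by positivity)]

lemma hasSum_rpow_mul_exp_neg_mul {x : ℝ} (s : ℝ) (hx : 0 < x) :
    HasSum (fun n : ℕ => x ^ s * exp (-((n + 1) * x))) (x ^ s / (exp x - 1)) := by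
  have hexp : 1 < exp x := one_lt_exp_iff.mpr hx
  have hgeom := (hasSum_geometric_of_lt_one (exp_pos (-x)).le
    (exp_lt_one_iff.mpr (neg_neg_of_pos hx))).mul_left (x ^ s * exp (-x))
  have hterm (n : ℕ) : x ^ s * exp (-x) * exp (-x) ^ n = x ^ s * exp (-((n + 1) * x)) := by
    rw [← exp_nat_mul, mul_assoc, ← exp_add]
    ring_nf
  have hval : x ^ s * exp (-x) * (1 - exp (-x))⁻¹ = x ^ s / (exp x - 1) := by
    rw [exp_neg]
    field_simp [(sub_pos.mpr hexp).ne']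
  simpa only [hterm, hval] using hgeom

lemma lintegral_rpow_mul_exp_neg_mul {a r : ℝ} (ha : 0 < a) (hr : 0 < r) :
    ∫⁻ x in Ioi 0, ENNReal.ofReal (x ^ (a - 1) * exp (-(r * x))) =
      ENNReal.ofReal (Gamma a / r ^ a) := by
  have hint : IntegrableOn (fun x : ℝ => x ^ (a - 1) * exp (-(r * x))) (Ioi 0) := by
    simpa using integrableOn_rpow_mul_exp_neg_mul_rpow (s := a - 1) (by linarith) one_pos hr
  rw [← ofReal_integral_eq_lintegral_ofReal hint, integral_rpow_mul_exp_neg_mul_Ioi ha hr,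
    one_div, inv_rpow hr.le, inv_mul_eq_div]
  exact ae_restrict_of_forall_mem measurableSet_Ioi fun x (hx : 0 < x) => by positivity

lemma lintegral_rpow_div_exp_sub_one {α : ℝ} (hα : 1 < α) :
    ∫⁻ x in Ioi 0, ENNReal.ofReal (x ^ (α - 1) / (exp x - 1)) =
      ENNReal.ofReal (Gamma α * rzeta α) := by
  have hterm (n : ℕ) : 0 ≤ Gamma α * (1 / ((n : ℝ) + 1) ^ α) := by
    have := Gamma_pos_of_pos (zero_lt_one.trans hα); positivity
  calc ∫⁻ x in Ioi 0, ENNReal.ofReal (x ^ (α - 1) / (exp x - 1))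
      = ∫⁻ x in Ioi 0, ∑' n : ℕ, ENNReal.ofReal (x ^ (α - 1) * exp (-((n + 1) * x))) := by
        refine setLIntegral_congr_fun measurableSet_Ioi fun x (hx : 0 < x) => ?_
        have hsum := hasSum_rpow_mul_exp_neg_mul (α - 1) hx
        rw [← hsum.tsum_eq, ENNReal.ofReal_tsum_of_nonneg (fun n => by positivity) hsum.summable]
    _ = ∑' n : ℕ, ENNReal.ofReal (Gamma α * (1 / ((n : ℝ) + 1) ^ α)) := by
        rw [lintegral_tsum fun n => by fun_prop]
        congr 1 with n
        rw [lintegral_rpow_mul_exp_neg_mul (zero_lt_one.trans hα) (by positivity), mul_one_div]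
    _ = ENNReal.ofReal (Gamma α * rzeta α) := by
        rw [← ENNReal.ofReal_tsum_of_nonneg hterm ((hasSum_rzeta hα).summable.mul_left _),
          tsum_mul_left, (hasSum_rzeta hα).tsum_eq]

lemma rpow_div_exp_sub_one_nonneg_ae (s : ℝ) :
    0 ≤ᵐ[volume.restrict (Ioi 0)] fun x : ℝ => x ^ s / (exp x - 1) :=
  ae_restrict_of_forall_mem measurableSet_Ioi fun x (hx : 0 < x) =>
    div_nonneg (rpow_nonneg hx.le s) (sub_nonneg.mpr (one_le_exp hx.le))

lemma integrableOn_rpow_div_exp_sub_one {α : ℝ} (hα : 1 < α) :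
    IntegrableOn (fun x => x ^ (α - 1) / (exp x - 1)) (Ioi 0) := by
  refine ⟨(by fun_prop : Measurable _).aestronglyMeasurable, ?_⟩
  rw [hasFiniteIntegral_iff_ofReal (rpow_div_exp_sub_one_nonneg_ae _),
    lintegral_rpow_div_exp_sub_one hα]
  exact ENNReal.ofReal_lt_top

lemma integral_rpow_div_exp_sub_one {α : ℝ} (hα : 1 < α) :
    ∫ x in Ioi 0, x ^ (α - 1) / (exp x - 1) = Gamma α * rzeta α := by
  have hnonneg : 0 ≤ Gamma α * rzeta α :=
    mul_nonneg (Gamma_pos_of_pos (zero_lt_one.trans hα)).le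
      ((hasSum_rzeta hα).nonneg fun n => by positivity)
  rw [integral_eq_lintegral_of_nonneg_ae (rpow_div_exp_sub_one_nonneg_ae _)
      (integrableOn_rpow_div_exp_sub_one hα).aestronglyMeasurable,
    lintegral_rpow_div_exp_sub_one hα, ENNReal.toReal_ofReal hnonneg]
lemma mul_rpow_le_rpow_div_exp_sub_one {x b : ℝ} (s : ℝ) (hx : 0 < x) (hxb : x ≤ b) :
    b / (exp b - 1) * x ^ (s - 1) ≤ x ^ s / (exp x - 1) := by
  have hb : 0 < b := hx.trans_le hxb
  have hslope : (exp x - 1) / x ≤ (exp b - 1) / b := by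
    simpa using convexOn_exp.secant_mono (mem_univ 0) (mem_univ x) (mem_univ b) hx.ne' hb.ne' hxb
  have hpos : 0 < (exp x - 1) / x := div_pos (sub_pos.mpr (one_lt_exp_iff.mpr hx)) hx
  calc b / (exp b - 1) * x ^ (s - 1) = x ^ (s - 1) / ((exp b - 1) / b) := by
        rw [div_div_eq_mul_div]; ring
    _ ≤ x ^ (s - 1) / ((exp x - 1) / x) := by gcongr
    _ = x ^ s / (exp x - 1) := by
        rw [div_div_eq_mul_div, ← rpow_add_one hx.ne', sub_add_cancel]

lemma div_le_setIntegral_Ioc_rpow_div_exp_sub_one {α b : ℝ} (hα : 1 < α) (hb : 0 < b) :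
    b ^ α / ((α - 1) * (exp b - 1)) ≤ ∫ x in Ioc 0 b, x ^ (α - 1) / (exp x - 1) := by
  have hpow : ∫ x in (0)..b, x ^ (α - 1 - 1) = b ^ (α - 1) / (α - 1) := by
    rw [integral_rpow (Or.inl (by linarith)), sub_add_cancel, zero_rpow (by linarith)]
    ring
  have hpow_int : IntegrableOn (fun x : ℝ => x ^ (α - 1 - 1)) (Ioc 0 b) :=
    (intervalIntegrable_iff_integrableOn_Ioc_of_le hb.le).mp
      (intervalIntegral.intervalIntegrable_rpow' (by linarith))
  have hexp : 0 < exp b - 1 := sub_pos.mpr (one_lt_exp_iff.mpr hb)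
  calc b ^ α / ((α - 1) * (exp b - 1))
      = ∫ x in Ioc 0 b, b / (exp b - 1) * x ^ (α - 1 - 1) := by
        rw [integral_const_mul, ← intervalIntegral.integral_of_le hb.le, hpow,
          rpow_sub_one hb.ne']
        field_simp
    _ ≤ ∫ x in Ioc 0 b, x ^ (α - 1) / (exp x - 1) :=
        setIntegral_mono_on (hpow_int.const_mul _)
          ((integrableOn_rpow_div_exp_sub_one hα).mono_set Ioc_subset_Ioi_self) measurableSet_Ioc
          fun x hx => mul_rpow_le_rpow_div_exp_sub_one _ hx.1 hx.2

theorem kernel_tail_integral_bound (α b : ℝ) (hα : 1 < α) (hb : 0 < b) :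
    (∫ x in Set.Ioi b, x ^ (α - 1) / (Real.exp x - 1)) ≤
      Real.Gamma α * rzeta α - b ^ α / ((α - 1) * (Real.exp b - 1)) := by
  have hint := integrableOn_rpow_div_exp_sub_one hα
  have hsplit := setIntegral_union Ioc_disjoint_Ioi_same measurableSet_Ioi
    (hint.mono_set Ioc_subset_Ioi_self) (hint.mono_set (Ioi_subset_Ioi hb.le))
  rw [Ioc_union_Ioi_eq_Ioi hb.le, integral_rpow_div_exp_sub_one hα] at hsplit
  linarith [div_le_setIntegral_Ioc_rpow_div_exp_sub_one hα hb]
end
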